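/- Every open subset Ω of ℂⁿ is n-holomorphically convex, where the functions f_λ(z - p) = (Σᵢ λᵢ·conj(zᵢ - pᵢ))/‖z - p‖² (for p ∉ Ω, λ unimodular componentwise) are used as separating functions: for every compact K ⊆ Ω, the hull of K with respect to the family 𝒪 consisting of all restrictions to Ω of such functions f_λ(· - p) with p ∈ ∂Ω, together with the coordinate functions zᵢ, is compact. -/

import Mathlib

open scoped BigOperators ComplexConjugate

/-- `f_{λ,p}(z) = (∑ i, λ i * conj (z i - p i)) / ‖z - p‖²` (junk value at `z = p`). -/
noncomputable def fLamP {n : ℕ} (lam : Fin n → ℂ) (p z : EuclideanSpace ℂ (Fin n)) : ℂ :=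
  (∑ i, lam i * conj (z i - p i)) / ((‖z - p‖ ^ 2 : ℝ) : ℂ)

/-- The hull of `K` in `Ω` with respect to a family `O` of functions. -/
def hull {n : ℕ} (O : Set (EuclideanSpace ℂ (Fin n) → ℂ))
    (Ω K : Set (EuclideanSpace ℂ (Fin n))) : Set (EuclideanSpace ℂ (Fin n)) :=
  {z ∈ Ω | ∀ f ∈ O, ‖f z‖ ≤ ⨆ x ∈ K, ‖f x‖}

/-!
For `z` in the hull and `p ∈ ∂Ω`, taking `λᵢ` to be the phase of `zᵢ - pᵢ` gives
`|f_{λ,p}(z)| = ∑ |zᵢ - pᵢ| / ‖z - p‖² ≥ 1 / ‖z - p‖`, while by Cauchy–Schwarz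
`|f_{λ,p}| ≤ √n / δ` on `K`, where `δ > 0` is the distance from `K` to `ℂⁿ \ Ω`. Hence the hull
stays at distance `≥ δ / √n` from `∂Ω`, so its closure lies in `Ω`; the coordinate functions bound
it, and since every function of the family is continuous on `Ω`, it is closed, hence compact.
-/

open InnerProductSpace

namespace EuclideanSpace

variable {𝕜 ι : Type*} [RCLike 𝕜] [Fintype ι]

theorem norm_le_sum_norm (x : EuclideanSpace 𝕜 ι) : ‖x‖ ≤ ∑ i, ‖x i‖ := by
  refine abs_le_of_sq_le_sq' ?_ (by positivity) |>.2
  rw [norm_sq_eq]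
  exact Finset.sum_sq_le_sq_sum_of_nonneg fun _ _ ↦ norm_nonneg _

theorem norm_toLp_of_forall_norm_eq_one {v : ι → 𝕜} (hv : ∀ i, ‖v i‖ = 1) :
    ‖WithLp.toLp 2 v‖ = √(Fintype.card ι) := by
  simp [norm_eq, hv]

theorem exists_forall_norm_eq_one_norm_le_norm_inner (u : EuclideanSpace ℂ ι) :
    ∃ v : ι → ℂ, (∀ i, ‖v i‖ = 1) ∧ ‖u‖ ≤ ‖⟪u, WithLp.toLp 2 v⟫_ℂ‖ := by
  refine ⟨fun i ↦ Complex.exp (Complex.arg (u i) * Complex.I), fun i ↦ ?_, ?_⟩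
  · exact Complex.norm_exp_ofReal_mul_I _
  · have hterm : ∀ w : ℂ, Complex.exp (Complex.arg w * Complex.I) * conj w = ‖w‖ := by
      intro w
      nth_rw 2 [← Complex.norm_mul_exp_arg_mul_I w]
      rw [map_mul, Complex.conj_ofReal, mul_left_comm, Complex.mul_conj',
        Complex.norm_exp_ofReal_mul_I, Complex.ofReal_one, one_pow, mul_one]
    simp only [PiLp.inner_apply, RCLike.inner_apply, hterm]
    rw [← Complex.ofReal_sum, Complex.norm_real, Real.norm_of_nonneg (by positivity)]
    exact norm_le_sum_norm u

end EuclideanSpace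

theorem Real.biSup_le {α : Type*} {s : Set α} {g : α → ℝ} {M : ℝ} (hM : 0 ≤ M)
    (h : ∀ x ∈ s, g x ≤ M) : ⨆ x ∈ s, g x ≤ M :=
  Real.iSup_le (fun x ↦ Real.iSup_le (h x) hM) hM

theorem IsCompact.exists_pos_forall_le_dist {X : Type*} [PseudoMetricSpace X] {K U : Set X}
    (hK : IsCompact K) (hU : IsOpen U) (hKU : K ⊆ U) :
    ∃ δ > 0, ∀ x ∈ K, ∀ p ∉ U, δ ≤ dist x p := by
  obtain ⟨δ, hδ, hsub⟩ := hK.exists_thickening_subset_open hU hKU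
  refine ⟨δ, hδ, fun x hx p hp ↦ not_lt.1 fun hlt ↦ hp (hsub ?_)⟩
  exact Metric.mem_thickening_iff.2 ⟨x, hx, by rwa [dist_comm]⟩

theorem closure_subset_of_forall_le_mul_dist_frontier {X : Type*} [PseudoMetricSpace X]
    {s A : Set X} {δ c : ℝ} (hδ : 0 < δ) (hA : A ⊆ s)
    (h : ∀ a ∈ A, ∀ p ∈ frontier s, δ ≤ c * dist a p) : closure A ⊆ s := by
  intro z hz
  by_contra hzs
  have hz_frontier : z ∈ frontier s := ⟨closure_mono hA hz, fun hi ↦ hzs (interior_subset hi)⟩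
  have hclosed : IsClosed {a | δ ≤ c * dist a z} := isClosed_le continuous_const (by fun_prop)
  have : δ ≤ c * dist z z := closure_minimal (fun a ha ↦ h a ha z hz_frontier) hclosed hz
  rw [dist_self, mul_zero] at this
  linarith

section fLamP

variable {n : ℕ} {lam : Fin n → ℂ} {p z : EuclideanSpace ℂ (Fin n)}

theorem fLamP_eq_inner (lam : Fin n → ℂ) (p z : EuclideanSpace ℂ (Fin n)) :
    fLamP lam p z = ⟪z - p, WithLp.toLp 2 lam⟫_ℂ / ((‖z - p‖ ^ 2 : ℝ) : ℂ) := by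
  rw [fLamP, PiLp.inner_apply]
  rfl

theorem norm_fLamP (lam : Fin n → ℂ) (p z : EuclideanSpace ℂ (Fin n)) :
    ‖fLamP lam p z‖ = ‖⟪z - p, WithLp.toLp 2 lam⟫_ℂ‖ / ‖z - p‖ ^ 2 := by
  rw [fLamP_eq_inner, norm_div, Complex.norm_real, Real.norm_of_nonneg (by positivity)]

theorem norm_fLamP_le (hlam : ∀ i, ‖lam i‖ = 1) : ‖fLamP lam p z‖ ≤ √n / ‖z - p‖ := by
  rw [norm_fLamP]
  calc ‖⟪z - p, WithLp.toLp 2 lam⟫_ℂ‖ / ‖z - p‖ ^ 2 ≤ ‖z - p‖ * √n / ‖z - p‖ ^ 2 := by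
        gcongr
        refine (norm_inner_le_norm (𝕜 := ℂ) _ _).trans_eq ?_
        rw [EuclideanSpace.norm_toLp_of_forall_norm_eq_one hlam, Fintype.card_fin]
    _ = √n / ‖z - p‖ := by
        rcases eq_or_ne ‖z - p‖ 0 with h | h
        · simp [h]
        · field_simp

theorem exists_inv_norm_le_norm_fLamP (p z : EuclideanSpace ℂ (Fin n)) :
    ∃ lam : Fin n → ℂ, (∀ i, ‖lam i‖ = 1) ∧ ‖z - p‖⁻¹ ≤ ‖fLamP lam p z‖ := by
  obtain ⟨lam, hlam, hle⟩ := EuclideanSpace.exists_forall_norm_eq_one_norm_le_norm_inner (z - p)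
  refine ⟨lam, hlam, ?_⟩
  rw [norm_fLamP]
  calc ‖z - p‖⁻¹ = ‖z - p‖ / ‖z - p‖ ^ 2 := by
        rcases eq_or_ne ‖z - p‖ 0 with h | h
        · simp [h]
        · field_simp
    _ ≤ ‖⟪z - p, WithLp.toLp 2 lam⟫_ℂ‖ / ‖z - p‖ ^ 2 := by gcongr

theorem continuousOn_fLamP (lam : Fin n → ℂ) (p : EuclideanSpace ℂ (Fin n)) :
    ContinuousOn (fLamP lam p) {p}ᶜ := by
  unfold fLamP
  refine ContinuousOn.div (by fun_prop) (by fun_prop) fun z hz ↦ ?_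
  simpa [sub_eq_zero] using hz

end fLamP

section hull

variable {n : ℕ} {O : Set (EuclideanSpace ℂ (Fin n) → ℂ)} {Ω K : Set (EuclideanSpace ℂ (Fin n))}

theorem le_sqrt_mul_dist_of_mem_hull {δ : ℝ} (hδ : 0 < δ) {p z : EuclideanSpace ℂ (Fin n)}
    (hpΩ : p ∉ Ω) (hpO : ∀ lam : Fin n → ℂ, (∀ i, ‖lam i‖ = 1) → fLamP lam p ∈ O)
    (hpK : ∀ x ∈ K, δ ≤ dist x p) (hz : z ∈ hull O Ω K) : δ ≤ √n * dist z p := by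
  obtain ⟨lam, hlam, hinv⟩ := exists_inv_norm_le_norm_fLamP p z
  have hsup : ⨆ x ∈ K, ‖fLamP lam p x‖ ≤ √n / δ := by
    refine Real.biSup_le (by positivity) fun x hx ↦ ?_
    calc ‖fLamP lam p x‖ ≤ √n / ‖x - p‖ := norm_fLamP_le hlam
      _ ≤ √n / δ := by
          rw [← dist_eq_norm]
          gcongr
          exact hpK x hx
  have hzp : 0 < dist z p := dist_pos.2 (ne_of_mem_of_not_mem hz.1 hpΩ)
  have := hinv.trans ((hz.2 _ (hpO lam hlam)).trans hsup)
  rwa [← dist_eq_norm, le_div_iff₀ hδ, inv_mul_le_iff₀ hzp, mul_comm] at this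

theorem isBounded_hull (hK : Bornology.IsBounded K) (hcoord : ∀ i, (fun z ↦ z i) ∈ O) :
    Bornology.IsBounded (hull O Ω K) := by
  obtain ⟨C, hC⟩ := hK.exists_norm_le
  have hC' : ∀ x ∈ K, ‖x‖ ≤ max C 0 := fun x hx ↦ (hC x hx).trans (le_max_left _ _)
  refine isBounded_iff_forall_norm_le.2 ⟨n * max C 0, fun z hz ↦ ?_⟩
  have hz_coord : ∀ i, ‖z i‖ ≤ max C 0 := fun i ↦ (hz.2 _ (hcoord i)).trans <|
    Real.biSup_le (le_max_right _ _) fun x hx ↦ (PiLp.norm_apply_le x i).trans (hC' x hx)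
  calc ‖z‖ ≤ ∑ i, ‖z i‖ := EuclideanSpace.norm_le_sum_norm z
    _ ≤ ∑ _i : Fin n, max C 0 := Finset.sum_le_sum fun i _ ↦ hz_coord i
    _ = n * max C 0 := by simp

theorem isClosed_hull_of_closure_subset (hcont : ∀ f ∈ O, ContinuousOn f Ω)
    (h : closure (hull O Ω K) ⊆ Ω) : IsClosed (hull O Ω K) := by
  set T := closure (hull O Ω K)
  have hT : hull O Ω K = T ∩ ⋂ f ∈ O, T ∩ (fun z ↦ ‖f z‖) ⁻¹' Set.Iic (⨆ x ∈ K, ‖f x‖) := by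
    ext z
    refine ⟨fun hz ↦ ⟨subset_closure hz,
      Set.mem_iInter₂.2 fun f hf ↦ ⟨subset_closure hz, hz.2 f hf⟩⟩,
      fun ⟨hzT, hz⟩ ↦ ⟨h hzT, fun f hf ↦ (Set.mem_iInter₂.1 hz f hf).2⟩⟩
  rw [hT]
  exact isClosed_closure.inter <| isClosed_biInter fun f hf ↦
    ((hcont f hf).mono h).norm.preimage_isClosed_of_isClosed isClosed_closure isClosed_Iic

end hull

/-- Every open subset of `ℂⁿ` is `n`-holomorphically convex, witnessed by the family of all
functions `f_{λ,p}` with `p ∈ ∂Ω` and `λ` componentwise unimodular, together with the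
coordinate functions: the hull of every compact `K ⊆ Ω` with respect to this family is compact. -/
theorem open_subset_n_holomorphically_convex {n : ℕ}
    (Ω : Set (EuclideanSpace ℂ (Fin n))) (hΩ : IsOpen Ω)
    (O : Set (EuclideanSpace ℂ (Fin n) → ℂ))
    (hO : O = {f | ∃ p ∈ frontier Ω, ∃ lam : Fin n → ℂ,
          (∀ i, ‖lam i‖ = 1) ∧ f = fLamP lam p} ∪
        {f | ∃ i : Fin n, f = fun z => z i}) :
    ∀ K : Set (EuclideanSpace ℂ (Fin n)), IsCompact K → K ⊆ Ω →
      IsCompact (hull O Ω K) := by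
  intro K hK hKΩ
  have hfrontier : ∀ p ∈ frontier Ω, p ∉ Ω :=
    fun p hp hpΩ ↦ Set.disjoint_left.1 (disjoint_frontier_iff_isOpen.2 hΩ) hp hpΩ
  obtain ⟨δ, hδ, hδK⟩ := hK.exists_pos_forall_le_dist hΩ hKΩ
  have hfar : ∀ z ∈ hull O Ω K, ∀ p ∈ frontier Ω, δ ≤ √n * dist z p :=
    fun z hz p hp ↦ le_sqrt_mul_dist_of_mem_hull hδ (hfrontier p hp)
      (fun lam hlam ↦ hO ▸ Or.inl ⟨p, hp, lam, hlam, rfl⟩)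
      (fun x hx ↦ hδK x hx p (hfrontier p hp)) hz
  have hcont : ∀ f ∈ O, ContinuousOn f Ω := by
    rw [hO]
    rintro f (⟨p, hp, lam, -, rfl⟩ | ⟨i, rfl⟩)
    · exact (continuousOn_fLamP lam p).mono fun z hz (hzp : z = p) ↦ hfrontier p hp (hzp ▸ hz)
    · fun_prop
  refine Metric.isCompact_of_isClosed_isBounded ?_
    (isBounded_hull hK.isBounded fun i ↦ hO ▸ Or.inr ⟨i, rfl⟩)
  exact isClosed_hull_of_closure_subset hcont
    (closure_subset_of_forall_le_mul_dist_frontier hδ (fun z hz ↦ hz.1) hfar)
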